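/- Every continuum in the plane ℝ² that is contained in the union of finitely many arcs is locally connected. -/

import Mathlib

/-- An arc in the plane: a subset homeomorphic to the closed unit interval, i.e. the image
of an injective continuous map from `[0,1]` into the plane. -/
def IsArc (A : Set (EuclideanSpace ℝ (Fin 2))) : Prop :=
  ∃ f : unitInterval → EuclideanSpace ℝ (Fin 2),
    Continuous f ∧ Function.Injective f ∧ Set.range f = A

/-!
Fix `x ∈ C`, `ε > 0`, and let `Q` be the component of `x` in `K = C ∩ closedBall x ε`. If `Q` is
not a neighbourhood of `x` in `C`, then `x` is a limit of points of `G = K \ Q`, and by boundary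
bumping the component in `K` of each such point lies in `G` and leaves `ball x ε`. Hence no set
clopen in `closure G` can separate `x` from the complement of the ball, so the component of `x`
in `closure G` is a nondegenerate continuum; it lies in `Q`, hence in `closure G \ G`.

This is impossible when `G` is covered by finitely many arcs. By Baire's theorem a nondegenerate
continuum `Y ⊆ closure G \ G` contains a subarc `f j '' Icc s t` of one of the arcs; the points of
`G` on that arc lie outside this subarc, so a smaller subarc `f j '' Icc s' t'` is a nondegenerate
continuum in `Y` that misses `closure (G ∩ range (f j))`. Induct on the number of arcs.
-/

open Set Filter Topology Metric

section Topological

variable {X : Type*} [TopologicalSpace X]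

theorem IsPreconnected.subset_of_isOpen_of_isClosed_inter {s M O : Set X}
    (hs : IsPreconnected s) (hsM : s ⊆ M) (hO : IsOpen O) (hOM : IsClosed (O ∩ M))
    (hsO : (s ∩ O).Nonempty) : s ⊆ O := by
  intro y hy
  by_contra hyO
  obtain ⟨z, hzs, hzO, hzOM⟩ := hs O (O ∩ M)ᶜ hO hOM.isOpen_compl
    (fun w _ => (em (w ∈ O)).imp_right fun hw hw' => hw hw'.1)
    hsO ⟨y, hy, fun h => hyO h.1⟩
  exact hzOM ⟨hzO, hsM hzs⟩

theorem IsClosed.connectedComponentIn {F : Set X} (hF : IsClosed F) (x : X) :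
    IsClosed (connectedComponentIn F x) := by
  by_cases hx : x ∈ F
  · refine closure_subset_iff_isClosed.mp <| isPreconnected_connectedComponentIn.closure
      |>.subset_connectedComponentIn (subset_closure (mem_connectedComponentIn hx))
      (closure_minimal (connectedComponentIn_subset _ _) hF)
  · rw [connectedComponentIn_eq_empty hx]
    exact isClosed_empty

theorem connectedComponentIn_subset_diff {F : Set X} {x y : X}
    (hy : y ∉ connectedComponentIn F x) :
    connectedComponentIn F y ⊆ F \ connectedComponentIn F x := fun z hz =>
  ⟨connectedComponentIn_subset _ _ hz, fun hzx =>
    hy ((connectedComponentIn_eq hzx).trans (connectedComponentIn_eq hz).symm ▸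
      mem_connectedComponentIn (connectedComponentIn_nonempty_iff.mp ⟨z, hz⟩))⟩

theorem exists_isClopen_of_connectedComponent_subset [CompactSpace X] [T2Space X] {x : X}
    {U : Set X} (hU : IsOpen U) (h : connectedComponent x ⊆ U) :
    ∃ V, IsClopen V ∧ x ∈ V ∧ V ⊆ U := by
  have : Nonempty {V : Set X // IsClopen V ∧ x ∈ V} := ⟨⟨univ, isClopen_univ, mem_univ x⟩⟩
  obtain ⟨⟨V, hV, hxV⟩, hVU⟩ := exists_subset_nhds_of_compactSpace
    (V := fun V : {V : Set X // IsClopen V ∧ x ∈ V} => V.1)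
    (fun V W => ⟨⟨V.1 ∩ W.1, V.2.1.inter W.2.1, V.2.2, W.2.2⟩,
      inter_subset_left, inter_subset_right⟩)
    (fun V => V.2.1.isClosed)
    (fun y hy => hU.mem_nhds (h (connectedComponent_eq_iInter_isClopen x ▸ hy)))
  exact ⟨V, hV, hxV, hVU⟩

variable [T2Space X]

theorem IsCompact.exists_isOpen_isClosed_inter_subset {M U : Set X} (hM : IsCompact M)
    (hU : IsOpen U) {x : X} (hx : x ∈ M) (h : connectedComponentIn M x ⊆ U) :
    ∃ O, IsOpen O ∧ x ∈ O ∧ IsClosed (O ∩ M) ∧ O ∩ M ⊆ U := by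
  have : CompactSpace M := isCompact_iff_compactSpace.mp hM
  rw [connectedComponentIn_eq_image hx, image_subset_iff] at h
  obtain ⟨V, hV, hxV, hVU⟩ :=
    exists_isClopen_of_connectedComponent_subset (hU.preimage continuous_subtype_val) h
  obtain ⟨O, hO, rfl⟩ := isOpen_induced_iff.mp hV.isOpen
  have hOM : O ∩ M = Subtype.val '' (Subtype.val ⁻¹' O : Set M) := by
    rw [Subtype.image_preimage_coe, inter_comm]
  refine ⟨O, hO, hxV, ?_, ?_⟩
  · rw [hOM]
    exact (hV.isClosed.isCompact.image continuous_subtype_val).isClosed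
  · rw [hOM, image_subset_iff]
    exact hVU

/-- The boundary bumping theorem. -/
theorem connectedComponentIn_inter_closure_diff_nonempty {Z F : Set X}
    (hZ : IsCompact Z) (hZc : IsPreconnected Z) (hF : IsClosed F) (hFZ : F ⊆ Z)
    (hZF : (Z \ F).Nonempty) {p : X} (hp : p ∈ F) :
    (connectedComponentIn F p ∩ closure (Z \ F)).Nonempty := by
  by_contra h
  rw [not_nonempty_iff_eq_empty, ← disjoint_iff_inter_eq_empty] at h
  obtain ⟨O, hO, hpO, hOF, hOFU⟩ :=
    (hZ.of_isClosed_subset hF hFZ).exists_isOpen_isClosed_inter_subset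
      isClosed_closure.isOpen_compl hp h.subset_compl_right
  have hO' : O ∩ (closure (Z \ F))ᶜ ∩ Z = O ∩ F := by
    ext z
    refine ⟨fun ⟨⟨hzO, hzc⟩, hzZ⟩ => ⟨hzO, ?_⟩,
      fun ⟨hzO, hzF⟩ => ⟨⟨hzO, hOFU ⟨hzO, hzF⟩⟩, hFZ hzF⟩⟩
    by_contra hzF
    exact hzc (subset_closure ⟨hzZ, hzF⟩)
  have hZO := hZc.subset_of_isOpen_of_isClosed_inter subset_rfl
    (hO.inter isClosed_closure.isOpen_compl) (hO' ▸ hOF)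
    ⟨p, hFZ hp, hpO, hOFU ⟨hpO, hp⟩⟩
  obtain ⟨z, hzZ, hzF⟩ := hZF
  exact hzF (hO' ▸ ⟨hZO hzZ, hzZ⟩ : z ∈ O ∩ F).2

theorem not_connectedComponentIn_closure_subset {G U : Set X} (hG : IsCompact (closure G))
    (hU : IsOpen U) {x : X} (hx : x ∈ closure G)
    (h : ∀ y ∈ G, ∃ P ⊆ closure G, IsPreconnected P ∧ y ∈ P ∧ ¬P ⊆ U) :
    ¬connectedComponentIn (closure G) x ⊆ U := by
  intro hxU
  obtain ⟨O, hO, hxO, hOG, hOGU⟩ := hG.exists_isOpen_isClosed_inter_subset hU hx hxU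
  obtain ⟨y, hyO, hyG⟩ := mem_closure_iff.mp hx O hO hxO
  obtain ⟨P, hPG, hP, hyP, hPU⟩ := h y hyG
  exact hPU fun z hz => hOGU ⟨hP.subset_of_isOpen_of_isClosed_inter hPG hO hOG ⟨y, hyP, hyO⟩ hz,
    hPG hz⟩

theorem IsCompact.exists_isOpen_inter_subset_of_subset_biUnion {ι : Type*} {Y : Set X}
    (hY : IsCompact Y) (hYn : Y.Nonempty) {A : ι → Set X} (hA : ∀ i, IsClosed (A i))
    {S : Finset ι} (hYS : Y ⊆ ⋃ i ∈ S, A i) :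
    ∃ j ∈ S, ∃ U, IsOpen U ∧ (Y ∩ U).Nonempty ∧ Y ∩ U ⊆ A j := by
  have : CompactSpace Y := isCompact_iff_compactSpace.mp hY
  have : Nonempty Y := hYn.to_subtype
  obtain ⟨⟨j, hj⟩, y, hy⟩ := nonempty_interior_of_iUnion_of_closed
    (f := fun i : S => (Subtype.val ⁻¹' A i : Set Y))
    (fun i => (hA i).preimage continuous_subtype_val)
    (by simpa [eq_univ_iff_forall, subset_def] using hYS)
  obtain ⟨U, hU, hUj⟩ :=
    isOpen_induced_iff.mp (isOpen_interior (s := (Subtype.val ⁻¹' A j : Set Y)))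
  refine ⟨j, hj, U, hU, ⟨y, y.2, (hUj.symm ▸ hy : y ∈ Subtype.val ⁻¹' U)⟩,
    fun z ⟨hzY, hzU⟩ => ?_⟩
  have : (⟨z, hzY⟩ : Y) ∈ interior (Subtype.val ⁻¹' A j) := hUj ▸ hzU
  exact interior_subset (s := (Subtype.val ⁻¹' A j : Set Y)) this

end Topological

section Arcs

variable {α X : Type*} [LinearOrder α] [TopologicalSpace α] [OrderClosedTopology α]
  [TopologicalSpace X] {f : α → X}

theorem Topology.IsInducing.exists_lt_image_Icc_subset (hf : IsInducing f) {P : Set X}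
    (hPf : P ⊆ range f) (hP : IsPreconnected P) (hPn : P.Nontrivial) :
    ∃ s t, s < t ∧ f '' Icc s t ⊆ P := by
  have hT : f '' (f ⁻¹' P) = P := image_preimage_eq_of_subset hPf
  obtain ⟨s, hs, t, ht, hst⟩ := (nontrivial_of_image f _ (hT ▸ hPn)).exists_lt
  have hTc : IsPreconnected (f ⁻¹' P) := hf.isPreconnected_image.mp (hT.symm ▸ hP)
  exact ⟨s, t, hst, hT ▸ image_mono (hTc.Icc_subset hs ht)⟩

theorem Topology.IsClosedEmbedding.disjoint_image_Icc_closure_inter_range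
    (hf : IsClosedEmbedding f) {G : Set X} {s t s' t' : α} (hG : Disjoint (f '' Icc s t) G)
    (hs : s < s') (ht : t' < t) : Disjoint (f '' Icc s' t') (closure (G ∩ range f)) := by
  have hGf : closure (G ∩ range f) ⊆ f '' (Iic s ∪ Ici t) := by
    refine closure_minimal ?_ (hf.isClosedMap _ (isClosed_Iic.union isClosed_Ici))
    rintro _ ⟨hu, u, rfl⟩
    refine ⟨u, ?_, rfl⟩
    by_contra h
    simp only [mem_union, mem_Iic, mem_Ici, not_or, not_le] at h
    exact hG.ne_of_mem (mem_image_of_mem f ⟨h.1.le, h.2.le⟩) hu rfl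
  refine Disjoint.mono_right hGf ((disjoint_image_iff hf.injective).mpr ?_)
  rw [disjoint_left]
  rintro u ⟨hsu, hut⟩ (hu | hu)
  · exact (hs.trans_le hsu).not_ge hu
  · exact (hut.trans_lt ht).not_ge hu

end Arcs

section Metric

variable {X : Type*} [MetricSpace X]

theorem IsPreconnected.exists_nontrivial_subset_inter_of_isOpen {Y U : Set X}
    (hY : IsCompact Y) (hYc : IsPreconnected Y) (hYn : Y.Nontrivial) (hU : IsOpen U)
    (hYU : (Y ∩ U).Nonempty) : ∃ P ⊆ Y ∩ U, IsPreconnected P ∧ P.Nontrivial := by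
  obtain ⟨p, hpY, hpU⟩ := hYU
  obtain ⟨q, hqY, hqp⟩ := hYn.exists_ne p
  obtain ⟨r₀, hr₀, hr₀U⟩ := Metric.isOpen_iff.mp hU p hpU
  set r := min (r₀ / 2) (dist q p / 2)
  have hr : 0 < r := lt_min (half_pos hr₀) (half_pos (dist_pos.mpr hqp))
  have hqr : q ∉ closedBall p r := fun h =>
    (mem_closedBall.mp h).not_gt ((min_le_right _ _).trans_lt (half_lt_self (dist_pos.mpr hqp)))
  obtain ⟨w, hwP, hw⟩ := connectedComponentIn_inter_closure_diff_nonempty hY hYc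
    (hY.isClosed.inter isClosed_closedBall) inter_subset_left ⟨q, hqY, fun h => hqr h.2⟩
    ⟨hpY, mem_closedBall_self hr.le⟩
  have hwp : w ≠ p := by
    rintro rfl
    refine closure_minimal (fun z hz => ?_) isOpen_ball.isClosed_compl hw (mem_ball_self hr)
    exact fun h => hz.2 ⟨hz.1, ball_subset_closedBall h⟩
  refine ⟨_, fun z hz => ?_, isPreconnected_connectedComponentIn,
    ⟨w, hwP, p, mem_connectedComponentIn ⟨hpY, mem_closedBall_self hr.le⟩, hwp⟩⟩
  have hz := connectedComponentIn_subset _ _ hz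
  exact ⟨hz.1, hr₀U (closedBall_subset_ball ((min_le_left _ _).trans_lt (half_lt_self hr₀)) hz.2)⟩

section

variable {α ι : Type*} [ConditionallyCompleteLinearOrder α] [TopologicalSpace α]
  [OrderTopology α] [DenselyOrdered α] {f : ι → α → X}

theorem subsingleton_of_subset_biUnion_closure_inter_range (hf : ∀ i, IsClosedEmbedding (f i))
    (S : Finset ι) {G Y : Set X} (hY : IsCompact Y) (hYc : IsPreconnected Y)
    (hYG : Disjoint Y G) (hYS : Y ⊆ ⋃ i ∈ S, closure (G ∩ range (f i))) : Y.Subsingleton := by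
  classical
  induction S using Finset.strongInduction generalizing Y with
  | H S ih =>
  rw [← not_nontrivial_iff]
  intro hYn
  obtain ⟨j, hjS, U, hU, hYU, hYUj⟩ := hY.exists_isOpen_inter_subset_of_subset_biUnion
    hYn.nonempty (fun _ => isClosed_closure) hYS
  obtain ⟨P, hPYU, hP, hPn⟩ := hYc.exists_nontrivial_subset_inter_of_isOpen hY hYn hU hYU
  have hPj : P ⊆ range (f j) :=
    hPYU.trans <| hYUj.trans <| closure_minimal inter_subset_right (hf j).isClosed_range
  obtain ⟨s, t, hst, hstP⟩ := (hf j).isInducing.exists_lt_image_Icc_subset hPj hP hPn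
  have hstY : f j '' Icc s t ⊆ Y := hstP.trans (hPYU.trans inter_subset_left)
  obtain ⟨s', hss', hs't⟩ := exists_between hst
  obtain ⟨t', hs't', ht't⟩ := exists_between hs't
  have hY'Y : f j '' Icc s' t' ⊆ Y := (image_mono (Icc_subset_Icc hss'.le ht't.le)).trans hstY
  have hY'j : Disjoint (f j '' Icc s' t') (closure (G ∩ range (f j))) :=
    (hf j).disjoint_image_Icc_closure_inter_range (hYG.mono_left hstY) hss' ht't
  have hY'S : f j '' Icc s' t' ⊆ ⋃ i ∈ S.erase j, closure (G ∩ range (f i)) := by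
    intro y hy
    obtain ⟨i, hi, hyi⟩ := mem_iUnion₂.mp (hYS (hY'Y hy))
    have hij : i ≠ j := by
      rintro rfl
      exact hY'j.ne_of_mem hy hyi rfl
    exact mem_iUnion₂.mpr ⟨i, Finset.mem_erase.mpr ⟨hij, hi⟩, hyi⟩
  have hY'n : (f j '' Icc s' t').Nontrivial :=
    Set.Nontrivial.image ⟨s', left_mem_Icc.mpr hs't'.le, t', right_mem_Icc.mpr hs't'.le,
      hs't'.ne⟩ (hf j).injective
  exact hY'n.not_subsingleton <| ih _ (Finset.erase_ssubset hjS)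
    (isCompact_Icc.image (hf j).continuous)
    (isPreconnected_Icc.image _ (hf j).continuous.continuousOn) (hYG.mono_left hY'Y) hY'S

theorem subsingleton_of_subset_closure_diff [Finite ι] (hf : ∀ i, IsClosedEmbedding (f i))
    {G Y : Set X} (hG : G ⊆ ⋃ i, range (f i)) (hY : IsCompact Y) (hYc : IsPreconnected Y)
    (hYG : Y ⊆ closure G \ G) : Y.Subsingleton := by
  have := Fintype.ofFinite ι
  refine subsingleton_of_subset_biUnion_closure_inter_range hf Finset.univ hY hYc
    (disjoint_left.mpr fun y hy => (hYG hy).2) fun y hy => ?_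
  have hGi : closure G = ⋃ i, closure (G ∩ range (f i)) := by
    rw [← closure_iUnion_of_finite, ← inter_iUnion, inter_eq_left.mpr hG]
  simpa [hGi] using (hYG hy).1

end

theorem connectedComponentIn_inter_closedBall_mem_nhdsWithin {C : Set X} (hC : IsCompact C)
    (hCc : IsPreconnected C)
    (hdeg : ∀ G ⊆ C, ∀ Y ⊆ closure G \ G, IsCompact Y → IsPreconnected Y → Y.Subsingleton)
    {x : X} (hx : x ∈ C) {ε : ℝ} (hε : 0 < ε) :
    connectedComponentIn (C ∩ closedBall x ε) x ∈ 𝓝[C] x := by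
  set K := C ∩ closedBall x ε
  set Q := connectedComponentIn K x
  have hK : IsCompact K := hC.inter_right isClosed_closedBall
  by_contra hQ
  have hCK : (C \ K).Nonempty := by
    by_contra h
    rw [not_nonempty_iff_eq_empty, sdiff_eq_empty] at h
    exact hQ (mem_of_superset self_mem_nhdsWithin (hCc.subset_connectedComponentIn hx h))
  set G := K \ Q
  have hxG : x ∈ closure G := mem_closure_iff_frequently.mpr <|
    ((not_eventually.mp hQ).and_eventually (inter_mem_nhdsWithin C (closedBall_mem_nhds x hε))
      |>.filter_mono nhdsWithin_le_nhds).mono fun y hy => ⟨hy.2, hy.1⟩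
  have hGK : closure G ⊆ K := closure_minimal sdiff_subset hK.isClosed
  set L := connectedComponentIn (closure G) x
  have hLQ : L ⊆ Q := isPreconnected_connectedComponentIn.subset_connectedComponentIn
    (mem_connectedComponentIn hxG) ((connectedComponentIn_subset _ _).trans hGK)
  have hL : L.Subsingleton := hdeg G (sdiff_subset.trans inter_subset_left) L
    (fun y hy => ⟨connectedComponentIn_subset _ _ hy, fun hyG => hyG.2 (hLQ hy)⟩)
    (hK.of_isClosed_subset (isClosed_closure.connectedComponentIn x)
      ((connectedComponentIn_subset _ _).trans hGK))
    isPreconnected_connectedComponentIn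
  refine not_connectedComponentIn_closure_subset (hK.of_isClosed_subset isClosed_closure hGK)
    isOpen_ball hxG (fun y hy => ?_)
    fun z hz => by rw [hL hz (mem_connectedComponentIn hxG)]; exact mem_ball_self hε
  obtain ⟨z, hzy, hzCK⟩ := connectedComponentIn_inter_closure_diff_nonempty hC hCc hK.isClosed
    inter_subset_left hCK hy.1
  refine ⟨_, (connectedComponentIn_subset_diff hy.2).trans subset_closure,
    isPreconnected_connectedComponentIn, mem_connectedComponentIn hy.1, fun hsub => ?_⟩
  exact closure_minimal (fun w hw hwB => hw.2 ⟨hw.1, ball_subset_closedBall hwB⟩)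
    isOpen_ball.isClosed_compl hzCK (hsub hzy)

theorem Metric.locallyConnectedSpace_of_connectedComponentIn_inter_closedBall_mem_nhdsWithin
    {C : Set X}
    (h : ∀ x ∈ C, ∀ ε > 0, connectedComponentIn (C ∩ closedBall x ε) x ∈ 𝓝[C] x) :
    LocallyConnectedSpace C := by
  rw [locallyConnectedSpace_iff_connected_subsets]
  rintro ⟨x, hx⟩ U hU
  obtain ⟨u, hu, huU⟩ := mem_nhds_subtype C _ U |>.mp hU
  obtain ⟨ε, hε, hεu⟩ := Metric.mem_nhds_iff.mp hu
  set Q := connectedComponentIn (C ∩ closedBall x (ε / 2)) x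
  have hQ : Subtype.val '' (Subtype.val ⁻¹' Q : Set C) = Q := by
    rw [Subtype.image_preimage_coe, inter_eq_right]
    exact (connectedComponentIn_subset _ _).trans inter_subset_left
  refine ⟨Subtype.val ⁻¹' Q, ?_, ?_, fun y hy => huU (hεu ?_)⟩
  · rw [mem_nhds_subtype_iff_nhdsWithin, hQ]
    exact h x hx _ (half_pos hε)
  · rw [← IsInducing.subtypeVal.isPreconnected_image, hQ]
    exact isPreconnected_connectedComponentIn
  · exact closedBall_subset_ball (half_lt_self hε) (connectedComponentIn_subset _ _ hy).2

end Metric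

/-- Every continuum in the plane contained in the union of finitely many arcs is
locally connected. -/
theorem continuum_in_finitely_many_arcs_locallyConnected
    (C : Set (EuclideanSpace ℝ (Fin 2)))
    (hCcpt : IsCompact C) (hCconn : IsConnected C)
    (n : ℕ) (A : Fin n → Set (EuclideanSpace ℝ (Fin 2)))
    (hA : ∀ i, IsArc (A i)) (hsub : C ⊆ ⋃ i, A i) :
    LocallyConnectedSpace C := by
  choose f hfc hfi hfA using hA
  have hdeg : ∀ G ⊆ C, ∀ Y ⊆ closure G \ G, IsCompact Y → IsPreconnected Y → Y.Subsingleton :=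
    fun G hGC Y hY hYc hYp => subsingleton_of_subset_closure_diff
      (fun i => (hfc i).isClosedEmbedding (hfi i)) (by simpa only [hfA] using hGC.trans hsub)
      hYc hYp hY
  exact Metric.locallyConnectedSpace_of_connectedComponentIn_inter_closedBall_mem_nhdsWithin
    fun x hx ε hε => connectedComponentIn_inter_closedBall_mem_nhdsWithin hCcpt
      hCconn.isPreconnected hdeg hx hε
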